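/- Let $R$ be a finitely generated $\mathbb{N}$-graded algebra over a Noetherian ring $R_0$ which is an integral domain, $I$ a nonzero homogeneous ideal of $R$, and $P \in \mathrm{Ass}(R/I)$. Let $X_P = \{P_1 \in \mathrm{Ass}(R/I) : P \subsetneq P_1\}$ and let $Q$ be the product of the ideals in $X_P$ (with $Q = R$ if $X_P$ is empty). If $f \in R$ satisfies $I : f = P$, then $f \in I : P$ and $f \notin I : (P + Q^\infty)$; in particular, $fQ^m \not\subseteq I$ for every $m \in \mathbb{N}$. -/

import Mathlib

/-!
Since `I : f = P`, every element of `P` kills `f` modulo `I`, so `f ∈ I : P`. If moreover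
`f Q^m ⊆ I`, then `Q^m ⊆ I : f = P`, and primality of `P` would put some `P₁ ∈ X_P` inside `P`,
contradicting `P ⊊ P₁`.
-/

namespace Ideal

variable {R : Type*} [CommSemiring R]

theorem mem_colon_iff_le_colon_span_singleton {I J : Ideal R} {f : R} :
    f ∈ I.colon (J : Set R) ↔ J ≤ I.colon (span {f}) := by
  rw [Submodule.mem_colon, SetLike.le_def]
  simp only [SetLike.mem_coe, mem_colon_span_singleton, smul_eq_mul, mul_comm f]

theorem mem_colon_colon_span_singleton (I : Ideal R) (f : R) :
    f ∈ I.colon (I.colon (span {f}) : Set R) :=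
  mem_colon_iff_le_colon_span_singleton.mpr le_rfl

theorem IsPrime.not_prod_pow_le {P : Ideal R} [P.IsPrime] {s : Finset (Ideal R)}
    (hs : ∀ p ∈ s, P < p) (m : ℕ) : ¬ (∏ p ∈ s, p) ^ m ≤ P := fun h => by
  obtain ⟨p, hp, hpP⟩ := IsPrime.prod_le ‹_› |>.mp (IsPrime.le_of_pow_le h)
  exact (hs p hp).not_ge hpP

end Ideal

theorem notMem_colon_infty_of_colon_eq_general
    {R : Type*} [CommRing R] (I : Ideal R)
    (P : Ideal R) (hP : P ∈ associatedPrimes R (R ⧸ I))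
    (XP : Finset (Ideal R))
    (hXP : (↑XP : Set (Ideal R)) = {P₁ | P₁ ∈ associatedPrimes R (R ⧸ I) ∧ P < P₁})
    (Q : Ideal R) (hQ : Q = ∏ p ∈ XP, p)
    (f : R) (hf : I.colon (Ideal.span {f}) = P) :
    f ∈ I.colon P ∧
      ¬ (f ∈ I.colon P ∧ ∃ m : ℕ, f ∈ I.colon ((Q ^ m : Ideal R) : Set R)) ∧
      ∀ m : ℕ, f ∉ I.colon ((Q ^ m : Ideal R) : Set R) := by
  have := hP.isPrime
  have hXP_lt : ∀ p ∈ XP, P < p := fun p hp => ((Set.ext_iff.mp hXP p).mp hp).2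
  have hQm : ∀ m : ℕ, f ∉ I.colon ((Q ^ m : Ideal R) : Set R) := fun m hm => by
    rw [Ideal.mem_colon_iff_le_colon_span_singleton, hf, hQ] at hm
    exact Ideal.IsPrime.not_prod_pow_le hXP_lt m hm
  exact ⟨hf ▸ I.mem_colon_colon_span_singleton f, fun ⟨_, m, hm⟩ => hQm m hm, hQm⟩

/-- Setup as in the paper: `R` a finitely generated `ℕ`-graded algebra over a
Noetherian ring `R₀`, `R` a domain, `I` a nonzero homogeneous ideal, `P ∈ Ass(R/I)`, `XP` the
set `{P₁ ∈ Ass(R/I) | P ⊊ P₁}` and `Q` the product of its elements (`Q = R = ⊤` if `XP = ∅`).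
If `f ∈ R` satisfies `I : f = P`, then `f ∈ I : P` and `f ∉ I : (P + Q^∞)`; in particular
`f Q^m ⊈ I` (i.e. `f ∉ I : Q^m`) for every `m ∈ ℕ`. -/
theorem notMem_colon_infty_of_colon_eq
    {R₀ R : Type*} [CommRing R₀] [IsNoetherianRing R₀]
    [CommRing R] [IsDomain R] [Algebra R₀ R] [Algebra.FiniteType R₀ R]
    (𝒜 : ℕ → Submodule R₀ R) [GradedAlgebra 𝒜]
    (I : Ideal R) (hI0 : I ≠ ⊥) (hIhom : I.IsHomogeneous 𝒜)
    (P : Ideal R) (hP : P ∈ associatedPrimes R (R ⧸ I))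
    (XP : Finset (Ideal R))
    (hXP : (↑XP : Set (Ideal R)) = {P₁ | P₁ ∈ associatedPrimes R (R ⧸ I) ∧ P < P₁})
    (Q : Ideal R) (hQ : Q = ∏ p ∈ XP, p)
    (f : R) (hf : I.colon (Ideal.span {f}) = P) :
    f ∈ I.colon P ∧
      ¬ (f ∈ I.colon P ∧ ∃ m : ℕ, f ∈ I.colon ((Q ^ m : Ideal R) : Set R)) ∧
      ∀ m : ℕ, f ∉ I.colon ((Q ^ m : Ideal R) : Set R) :=
  notMem_colon_infty_of_colon_eq_general I P hP XP hXP Q hQ f hf
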